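/- Let K be a Markov (probability) kernel on ℝ^M that leaves π_k invariant, i.e. π_k.bind K = π_k. Then for every bounded measurable h : ℝ^M → ℝ, ∫∫ G(x) h(x') K(T(x), dx') dπ_{k-1}(x) = (Z_k / Z_{k-1}) ∫ h dπ_k. That is, one step of the SMC-with-normalizing-flow sampler (transport by T, importance reweighting by G, then an MCMC move by K) maps π_{k-1}-distributed weighted samples to π_k-distributed weighted samples with weight normalization Z_k / Z_{k-1}. -/

import Mathlib

/-!
Transport by `T` followed by reweighting by `G` is an exact importance-sampling identity: since
`γ_{k-1}` cancels and `|det DT|` is the Jacobian of the substitution `y = T x`,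
`∫ G · (φ ∘ T) dπ_{k-1} = Z_{k-1}⁻¹ ∫ γ_k φ dvol = (Z_k / Z_{k-1}) ∫ φ dπ_k`.
Taking `φ = ∫ h dK(·)`, the invariance `π_k.bind K = π_k` turns `∫ φ dπ_k` into `∫ h dπ_k`.
-/

open MeasureTheory ProbabilityTheory

section Density

variable {α : Type*} [MeasurableSpace α] {μ : Measure α}

lemma integral_pos_of_forall_pos [NeZero μ] {f : α → ℝ} (hf : ∀ x, 0 < f x)
    (hfi : Integrable f μ) : 0 < ∫ x, f x ∂μ := by
  rw [integral_pos_iff_support_of_nonneg (fun x => (hf x).le) hfi,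
    Function.support_eq_univ fun x => (hf x).ne']
  exact Measure.measure_univ_pos.mpr (NeZero.ne μ)

lemma integral_withDensity_ofReal {d : α → ℝ} (hd : Measurable d) (hd0 : ∀ x, 0 ≤ d x)
    (φ : α → ℝ) :
    ∫ x, φ x ∂μ.withDensity (fun x => ENNReal.ofReal (d x)) = ∫ x, d x * φ x ∂μ := by
  change ∫ x, φ x ∂μ.withDensity (fun x => ((d x).toNNReal : ENNReal)) = _
  rw [integral_withDensity_eq_integral_smul hd.real_toNNReal]
  simp only [NNReal.smul_def, Real.coe_toNNReal _ (hd0 _), smul_eq_mul]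

lemma integral_withDensity_ofReal_div {γ : α → ℝ} (hγ : Measurable γ) (hγ0 : ∀ x, 0 ≤ γ x)
    {Z : ℝ} (hZ : 0 ≤ Z) (φ : α → ℝ) :
    ∫ x, φ x ∂μ.withDensity (fun x => ENNReal.ofReal (γ x / Z))
      = Z⁻¹ * ∫ x, γ x * φ x ∂μ := by
  rw [integral_withDensity_ofReal (hγ.div_const Z) (fun x => div_nonneg (hγ0 x) hZ),
    ← integral_const_mul]
  congr 1 with x
  ring

end Density

lemma integral_integral_of_bind_eq {α : Type*} [MeasurableSpace α] {μ : Measure α} [SFinite μ]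
    {κ : Kernel α α} [IsSFiniteKernel κ] (hκ : μ.bind κ = μ) {f : α → ℝ}
    (hf : Integrable f μ) :
    ∫ x, ∫ y, f y ∂κ x ∂μ = ∫ x, f x ∂μ := by
  rw [← hκ] at hf
  conv_rhs => rw [← hκ]
  rw [Measure.comp_eq_comp_const_apply] at hf ⊢
  rw [Kernel.integral_comp hf, Kernel.const_apply]

lemma integral_abs_det_fderiv_smul_comp {E F : Type*} [NormedAddCommGroup E] [NormedSpace ℝ E]
    [FiniteDimensional ℝ E] [MeasurableSpace E] [BorelSpace E] [NormedAddCommGroup F]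
    [NormedSpace ℝ F] (μ : Measure E) [μ.IsAddHaarMeasure] {T : E → E}
    (hT : Differentiable ℝ T) (hT_bij : Function.Bijective T) (φ : E → F) :
    ∫ x, |(fderiv ℝ T x).det| • φ (T x) ∂μ = ∫ y, φ y ∂μ := by
  have := integral_image_eq_integral_abs_det_fderiv_smul μ MeasurableSet.univ
    (fun x _ => (hT x).hasFDerivAt.hasFDerivWithinAt) hT_bij.injective.injOn φ
  rwa [Set.image_univ, hT_bij.surjective.range_eq, Measure.restrict_univ, eq_comm] at this

theorem craft_smc_nf_step_correct_general
    (M : ℕ)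
    (γkm γk : (Fin M → ℝ) → ℝ)
    (hγkm_pos : ∀ x, 0 < γkm x) (hγk_pos : ∀ x, 0 < γk x)
    (hγkm_meas : Measurable γkm) (hγk_meas : Measurable γk)
    (hγk_int : Integrable γk)
    (Zkm Zk : ℝ)
    (hZkm : Zkm = ∫ x, γkm x) (hZk : Zk = ∫ x, γk x)
    (πkm πk : Measure (Fin M → ℝ))
    (hπkm : πkm = volume.withDensity (fun x => ENNReal.ofReal (γkm x / Zkm)))
    (hπk : πk = volume.withDensity (fun x => ENNReal.ofReal (γk x / Zk)))
    (T Tinv : (Fin M → ℝ) → (Fin M → ℝ))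
    (hT : ContDiff ℝ 1 T)
    (hTleft : Function.LeftInverse Tinv T)
    (hTright : Function.RightInverse Tinv T)
    (G : (Fin M → ℝ) → ℝ)
    (hG : ∀ x, G x = γk (T x) / γkm x * |(fderiv ℝ T x).det|)
    (K : Kernel (Fin M → ℝ) (Fin M → ℝ)) [IsMarkovKernel K]
    (hKinv : πk.bind (fun x => K x) = πk)
    (h : (Fin M → ℝ) → ℝ)
    (hh_meas : Measurable h) (hh_bdd : ∃ C : ℝ, ∀ x, |h x| ≤ C) :
    ∫ x, G x * (∫ x', h x' ∂(K (T x))) ∂πkm = (Zk / Zkm) * ∫ y, h y ∂πk := by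
  obtain ⟨C, hC⟩ := hh_bdd
  set φ := fun y => ∫ x', h x' ∂(K y)
  have hZkm_nonneg : 0 ≤ Zkm := hZkm ▸ integral_nonneg fun x => (hγkm_pos x).le
  have hZk_pos : 0 < Zk := hZk ▸ integral_pos_of_forall_pos hγk_pos hγk_int
  have : IsFiniteMeasure πk := hπk ▸ isFiniteMeasure_withDensity_ofReal (hγk_int.div_const Zk).2
  have hh_int : Integrable h πk := .of_bound hh_meas.aestronglyMeasurable C (.of_forall hC)
  subst hπkm
  calc ∫ x, G x * φ (T x) ∂_
      = Zkm⁻¹ * ∫ x, |(fderiv ℝ T x).det| • (γk (T x) * φ (T x)) := by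
        rw [integral_withDensity_ofReal_div hγkm_meas (fun x => (hγkm_pos x).le) hZkm_nonneg]
        congr 1
        refine integral_congr_ae (.of_forall fun x => ?_)
        simp only [hG, smul_eq_mul]
        field_simp [(hγkm_pos x).ne']
    _ = Zkm⁻¹ * (Zk * ∫ y, φ y ∂πk) := by
        rw [integral_abs_det_fderiv_smul_comp volume (hT.differentiable one_ne_zero)
          ⟨hTleft.injective, hTright.surjective⟩ fun y => γk y * φ y, hπk,
          integral_withDensity_ofReal_div hγk_meas (fun x => (hγk_pos x).le) hZk_pos.le,
          mul_inv_cancel_left₀ hZk_pos.ne']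
    _ = (Zk / Zkm) * ∫ y, h y ∂πk := by
        rw [integral_integral_of_bind_eq hKinv hh_int, div_eq_inv_mul, mul_assoc]

/-- One SMC-with-normalizing-flow step (transport by `T`, importance
reweighting by `G`, then an MCMC move by a `π_k`-invariant Markov kernel `K`)
maps `π_{k-1}`-distributed weighted samples to `π_k`-distributed weighted samples
with weight normalization `Z_k / Z_{k-1}`. -/
theorem craft_smc_nf_step_correct
    (M : ℕ)
    (γkm γk : (Fin M → ℝ) → ℝ)
    (hγkm_pos : ∀ x, 0 < γkm x) (hγk_pos : ∀ x, 0 < γk x)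
    (hγkm_meas : Measurable γkm) (hγk_meas : Measurable γk)
    (hγkm_int : Integrable γkm) (hγk_int : Integrable γk)
    (Zkm Zk : ℝ)
    (hZkm : Zkm = ∫ x, γkm x) (hZk : Zk = ∫ x, γk x)
    (πkm πk : Measure (Fin M → ℝ))
    (hπkm : πkm = volume.withDensity (fun x => ENNReal.ofReal (γkm x / Zkm)))
    (hπk : πk = volume.withDensity (fun x => ENNReal.ofReal (γk x / Zk)))
    (T Tinv : (Fin M → ℝ) → (Fin M → ℝ))
    (hT : ContDiff ℝ 1 T) (hTinv : ContDiff ℝ 1 Tinv)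
    (hTleft : Function.LeftInverse Tinv T)
    (hTright : Function.RightInverse Tinv T)
    (G : (Fin M → ℝ) → ℝ)
    (hG : ∀ x, G x = γk (T x) / γkm x * |(fderiv ℝ T x).det|)
    (K : Kernel (Fin M → ℝ) (Fin M → ℝ)) [IsMarkovKernel K]
    (hKinv : πk.bind (fun x => K x) = πk)
    (h : (Fin M → ℝ) → ℝ)
    (hh_meas : Measurable h) (hh_bdd : ∃ C : ℝ, ∀ x, |h x| ≤ C) :
    ∫ x, G x * (∫ x', h x' ∂(K (T x))) ∂πkm = (Zk / Zkm) * ∫ y, h y ∂πk :=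
  craft_smc_nf_step_correct_general M γkm γk hγkm_pos hγk_pos hγkm_meas hγk_meas hγk_int Zkm Zk hZkm
    hZk πkm πk hπkm hπk T Tinv hT hTleft hTright G hG K hKinv h hh_meas hh_bdd
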